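/- Let p = g∘f and suppose w ∈ ∂W_j with Re w ≥ 0, where 2^{-j} ≤ ε and the rectangle I₁ = {x+iy : 1/4 ≤ x ≤ 1, 0 ≤ y ≤ ε} together with the triangle I₂ = {x+iy : y < x ≤ 1/4, 0 ≤ y ≤ ε} is contained in the escaping set I(p). Then for all sufficiently small η > 0, the point w + η belongs to I(p); consequently w ∈ ∂I(p) (since w itself lies on the boundary of the non-escaping diamond W̄_j). -/

import Mathlib

open Set Complex Filter

/-- The slice function `h_y`. -/
noncomputable def hy (y x : ℝ) : ℝ :=
  if |x| + |y - 3/4| < 1/4 then 1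
  else if y ≤ |x| then 4
  else if y ≤ 3/4 then 6 * |x| - 6 * y + 4
  else (3 * |x| + 5 * y - 4) / (2 * y - 1)

/-- The map `h(x + iy) = h_y(x)·x + iy`. -/
noncomputable def hmap (z : ℂ) : ℂ := ⟨hy z.im z.re * z.re, z.im⟩

/-- For `y > 0`, the unique integer `m` with `2^{-(m+1)} < y ≤ 2^{-m}`. -/
noncomputable def mval (y : ℝ) : ℤ := ⌊Real.logb 2 y⁻¹⌋

/-- The map `f`: equal to `2^{-(m+1)} h(2^m z)` when `Im z ∈ (2^{-(m+1)}, 2^{-m}]`,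
and to `2x + iy/2` when `Im z ≤ 0`. -/
noncomputable def f (z : ℂ) : ℂ :=
  if z.im ≤ 0 then ⟨2 * z.re, z.im / 2⟩
  else (2 : ℂ) ^ (-(mval z.im + 1)) * hmap ((2 : ℂ) ^ (mval z.im) * z)

/-- The open diamond `W₀` with vertices `i`, `i/2`, `(3i+1)/4`, `(3i-1)/4`. -/
def W0 : Set ℂ := {z : ℂ | |z.re| + |z.im - 3/4| < 1/4}

/-- The scaled diamonds `W_k = 2^{-k} W₀`. -/
def W (k : ℕ) : Set ℂ := (fun z : ℂ => (2 : ℂ) ^ (-(k : ℤ)) * z) '' W0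

/-- The map `g`. -/
noncomputable def g (δ : ℝ) (d : ℕ) (z : ℂ) : ℂ :=
  if ‖z‖ ≤ 1 then z
  else if ‖z‖ ≤ 2 then z + δ * (‖z‖ - 1) * z ^ d
  else z + δ * z ^ d

/-- The polynomial-type quasiregular map `p = g ∘ f`. -/
noncomputable def p (δ : ℝ) (d : ℕ) : ℂ → ℂ := g δ d ∘ f

/-- The escaping set. -/
def escapingSet (q : ℂ → ℂ) : Set ℂ :=
  {z : ℂ | Tendsto (fun n : ℕ => ‖q^[n] z‖) atTop atTop}

/-- The rectangle `I₁`. -/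
def I1 (ε : ℝ) : Set ℂ := {z : ℂ | 1/4 ≤ z.re ∧ z.re ≤ 1 ∧ 0 ≤ z.im ∧ z.im ≤ ε}

/-- The triangle `I₂`. -/
def I2 (ε : ℝ) : Set ℂ := {z : ℂ | z.im < z.re ∧ z.re ≤ 1/4 ∧ 0 ≤ z.im ∧ z.im ≤ ε}

/-!
On the strip `2^{-(k+1)} < Im z ≤ 2^{-k}` the map `f` is `z ↦ 2^{-(k+1)} h(2^k z)`, so the
`f`-orbit of `2^{-k} ζ` is `2^{-(k+n)} hⁿ(ζ)`, and `h` acts at the fixed height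
`y = Im ζ ∈ (1/2, 1]` by the one-dimensional map `t ↦ h_y(t) t`. To the right of `W₀` this map is expanding: its
multiplier is at least `1`, it drives `t` away from the diamond geometrically, and it is `4` once
`t ≥ y`. Hence the real part `2^{-(k+n)} tₙ` of the orbit of a point just to the right of `∂W_j`
doubles from some time on; stopping at the first time it exceeds `1/4`, it is at most `1/2`, the
orbit has stayed in the unit disc where `g` is the identity, and it has landed in `I₁`.
On the other hand `f` is `z ↦ z/2` on each `W_k`, so points of `W_j` do not escape and a point of
`closure W_j` is not interior to `I(p)`.
-/

open Set Complex Filter Topology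

lemma two_zpow_eq_ofReal (k : ℤ) : (2 : ℂ) ^ k = ((2 : ℝ) ^ k : ℝ) := by push_cast; rfl

@[simp] lemma re_two_zpow_mul (k : ℤ) (z : ℂ) : ((2 : ℂ) ^ k * z).re = 2 ^ k * z.re := by
  rw [two_zpow_eq_ofReal, re_ofReal_mul]

@[simp] lemma im_two_zpow_mul (k : ℤ) (z : ℂ) : ((2 : ℂ) ^ k * z).im = 2 ^ k * z.im := by
  rw [two_zpow_eq_ofReal, im_ofReal_mul]

lemma norm_two_zpow_mul (k : ℤ) (z : ℂ) : ‖(2 : ℂ) ^ k * z‖ = 2 ^ k * ‖z‖ := by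
  simp [norm_zpow]

lemma mval_two_zpow_mul (k : ℤ) {y : ℝ} (h1 : 1 / 2 < y) (h2 : y ≤ 1) :
    mval (2 ^ (-k) * y) = k := by
  have hy : 0 < y := by linarith
  have hlog : Real.logb 2 (2 ^ (-k) * y)⁻¹ = k - Real.logb 2 y := by
    rw [mul_inv, Real.logb_mul (by positivity) (by positivity), Real.logb_inv, Real.logb_inv,
      ← Real.rpow_intCast, Real.logb_rpow two_pos (by norm_num)]
    push_cast; ring
  have hle : Real.logb 2 y ≤ 0 := Real.logb_nonpos (by norm_num) hy.le h2
  have hlt : -1 < Real.logb 2 y := by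
    rw [Real.lt_logb_iff_rpow_lt (by norm_num) hy]; norm_num; linarith
  rw [mval, hlog, Int.floor_eq_iff]
  constructor <;> linarith

lemma f_two_zpow_mul (k : ℤ) {ζ : ℂ} (h1 : 1 / 2 < ζ.im) (h2 : ζ.im ≤ 1) :
    f ((2 : ℂ) ^ (-k) * ζ) = (2 : ℂ) ^ (-(k + 1)) * hmap ζ := by
  have him : ((2 : ℂ) ^ (-k) * ζ).im = 2 ^ (-k) * ζ.im := im_two_zpow_mul _ _
  rw [f, if_neg (not_le.mpr (by rw [him]; exact mul_pos (zpow_pos two_pos _) (by linarith))), him,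
    mval_two_zpow_mul k h1 h2, ← mul_assoc, ← zpow_add₀ two_ne_zero, add_neg_cancel, zpow_zero,
    one_mul]

noncomputable def hSlice (y t : ℝ) : ℝ := hy y t * t

lemma iterate_hmap (ζ : ℂ) (n : ℕ) : hmap^[n] ζ = ⟨(hSlice ζ.im)^[n] ζ.re, ζ.im⟩ := by
  induction n with
  | zero => rfl
  | succ n ih => rw [Function.iterate_succ_apply', ih, Function.iterate_succ_apply']; rfl

lemma iterate_f_two_zpow_mul (k : ℤ) {ζ : ℂ} (h1 : 1 / 2 < ζ.im) (h2 : ζ.im ≤ 1) (n : ℕ) :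
    f^[n] ((2 : ℂ) ^ (-k) * ζ) = (2 : ℂ) ^ (-(k + n)) * hmap^[n] ζ := by
  induction n with
  | zero => simp
  | succ n ih =>
    have him : (hmap^[n] ζ).im = ζ.im := by rw [iterate_hmap]
    rw [Function.iterate_succ_apply', ih, ← neg_neg (-(k + n)),
      f_two_zpow_mul _ (him ▸ h1) (him ▸ h2), Function.iterate_succ_apply']
    push_cast; ring_nf

lemma hmap_of_mem_W0 {ζ : ℂ} (hζ : ζ ∈ W0) : hmap ζ = ζ := by
  rw [hmap, hy, if_pos (show |ζ.re| + |ζ.im - 3 / 4| < 1 / 4 from hζ), one_mul]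

section Slice

variable {y t : ℝ}

lemma le_hSlice (ht : 0 < t) (hout : 1 / 4 < t + |y - 3 / 4|) :
    t ≤ hSlice y t := by
  suffices 1 ≤ hy y t by unfold hSlice; nlinarith
  rw [hy, abs_of_pos ht]
  split_ifs with hA hB hC
  · norm_num
  · norm_num
  · rcases abs_cases (y - 3 / 4) with ⟨he, _⟩ | ⟨he, _⟩ <;> rw [he] at hout <;> linarith
  · rw [le_div_iff₀ (by linarith)]
    rcases abs_cases (y - 3 / 4) with ⟨he, _⟩ | ⟨he, _⟩ <;> rw [he] at hout <;> linarith

lemma hSlice_le (ht : 0 ≤ t) : hSlice y t ≤ 4 * t := by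
  suffices hy y t ≤ 4 by unfold hSlice; nlinarith
  rw [hy, abs_of_nonneg ht]
  split_ifs with hA hB hC
  · norm_num
  · norm_num
  · linarith
  · rw [div_le_iff₀ (by linarith)]; linarith

lemma hSlice_of_le (h1 : 1 / 2 < y) (hyt : y ≤ t) : hSlice y t = 4 * t := by
  have ht : 0 < t := by linarith
  rw [hSlice, hy, abs_of_pos ht, if_neg (by intro h; linarith [abs_nonneg (y - 3 / 4)]), if_pos hyt,
    mul_comm]

/-- `1/4 - |y - 3/4|` is the right end of the slice of `W₀` at height `y`. -/
lemma hSlice_sub_edge (h2 : y ≤ 1) (ht : 0 < t) (hout : 1 / 4 < t + |y - 3 / 4|)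
    (hty : t < y) :
    (t - (1 / 4 - |y - 3 / 4|)) * (1 + 3 * t) ≤ hSlice y t - (1 / 4 - |y - 3 / 4|) := by
  rw [hSlice, hy, abs_of_pos ht]
  split_ifs with hA hB hC
  · linarith
  · linarith
  · rw [abs_of_nonpos (by linarith : y - 3 / 4 ≤ 0)] at hout ⊢
    nlinarith [mul_pos ht (by linarith : 0 < t - y + 1 / 2)]
  · have he : |y - 3 / 4| = y - 3 / 4 := abs_of_nonneg (by linarith)
    rw [he] at hout ⊢
    rw [div_mul_eq_mul_div, le_sub_iff_add_le, le_div_iff₀ (by linarith)]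
    nlinarith [mul_nonneg (mul_nonneg (by linarith : 0 ≤ t - (1 - y)) ht.le)
      (by linarith : (0 : ℝ) ≤ 2 - 2 * y)]

variable {x : ℝ}

lemma le_iterate_hSlice (hx : 0 < x) (hout : 1 / 4 < x + |y - 3 / 4|) (n : ℕ) :
    x ≤ (hSlice y)^[n] x := by
  induction n with
  | zero => rfl
  | succ n ih =>
    rw [Function.iterate_succ_apply']
    exact ih.trans (le_hSlice (by linarith) (by linarith))

lemma exists_le_iterate_hSlice (h2 : y ≤ 1) (hx : 0 < x) (hout : 1 / 4 < x + |y - 3 / 4|) :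
    ∃ n, y ≤ (hSlice y)^[n] x := by
  by_contra! hlt
  set b := 1 / 4 - |y - 3 / 4| with hb
  have hbx : b < x := by linarith
  have hgrow : ∀ n, (x - b) * (1 + 3 * x) ^ n ≤ (hSlice y)^[n] x - b := by
    intro n
    induction n with
    | zero => simp
    | succ n ih =>
      have hxn := le_iterate_hSlice hx hout n
      rw [Function.iterate_succ_apply', pow_succ, ← mul_assoc]
      calc (x - b) * (1 + 3 * x) ^ n * (1 + 3 * x)
          ≤ ((hSlice y)^[n] x - b) * (1 + 3 * (hSlice y)^[n] x) := by
            gcongr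
            linarith
        _ ≤ _ := hSlice_sub_edge h2 (by linarith) (by linarith) (hlt n)
  obtain ⟨n, hn⟩ := pow_unbounded_of_one_lt ((y - b) / (x - b)) (by linarith : (1 : ℝ) < 1 + 3 * x)
  rw [div_lt_iff₀ (by linarith)] at hn
  linarith [hgrow n, hlt n]

lemma iterate_hSlice_add (h1 : 1 / 2 < y) {N : ℕ} (hN : y ≤ (hSlice y)^[N] x) (i : ℕ) :
    (hSlice y)^[N + i] x = 4 ^ i * (hSlice y)^[N] x := by
  induction i with
  | zero => simp
  | succ i ih =>
    have hyle : y ≤ (hSlice y)^[N + i] x := by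
      rw [ih]; nlinarith [one_le_pow₀ (by norm_num : (1 : ℝ) ≤ 4) (n := i)]
    rw [← add_assoc, Function.iterate_succ_apply', hSlice_of_le h1 hyle, ih, pow_succ]
    ring

lemma exists_le_iterate_hSlice_div (h1 : 1 / 2 < y) (h2 : y ≤ 1) (hx : 0 < x)
    (hout : 1 / 4 < x + |y - 3 / 4|) (B : ℝ) : ∃ n, B ≤ (hSlice y)^[n] x / 2 ^ n := by
  obtain ⟨N, hN⟩ := exists_le_iterate_hSlice h2 hx hout
  obtain ⟨i, hi⟩ := pow_unbounded_of_one_lt (B * 2 ^ N / y) one_lt_two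
  refine ⟨N + i, ?_⟩
  rw [iterate_hSlice_add h1 hN, le_div_iff₀ (by positivity), pow_add,
    show (4 : ℝ) ^ i = 2 ^ i * 2 ^ i by rw [← mul_pow]; norm_num]
  rw [div_lt_iff₀ (by linarith)] at hi
  nlinarith [pow_pos (two_pos (α := ℝ)) i, pow_pos (two_pos (α := ℝ)) N]

end Slice

lemma iterate_p_eq_iterate_f (δ : ℝ) (d : ℕ) {z : ℂ} {n : ℕ}
    (h : ∀ i, 0 < i → i ≤ n → ‖f^[i] z‖ ≤ 1) : (p δ d)^[n] z = f^[n] z := by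
  induction n with
  | zero => rfl
  | succ n ih =>
    rw [Function.iterate_succ_apply', Function.iterate_succ_apply',
      ih fun i hi hin => h i hi (by omega), p, Function.comp_apply, g,
      if_pos (by simpa only [Function.iterate_succ_apply'] using h (n + 1) n.succ_pos le_rfl)]

lemma mem_escapingSet_of_iterate {q : ℂ → ℂ} {z : ℂ} (N : ℕ) (h : q^[N] z ∈ escapingSet q) :
    z ∈ escapingSet q := by
  refine (tendsto_add_atTop_iff_nat N).mp ?_
  simp only [Function.iterate_add_apply]
  exact h

lemma norm_lt_of_mem_W0 {ζ : ℂ} (hζ : ζ ∈ W0) : ‖ζ‖ < 5 / 4 := by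
  have hζ' : |ζ.re| + |ζ.im - 3 / 4| < 1 / 4 := hζ
  have := abs_sub_abs_le_abs_sub ζ.im (3 / 4)
  linarith [Complex.norm_le_abs_re_add_abs_im ζ, abs_nonneg ζ.re, abs_nonneg (ζ.im - 3 / 4)]

lemma notMem_escapingSet_of_mem_W (δ : ℝ) (d k : ℕ) {z : ℂ} (hz : z ∈ W k) :
    z ∉ escapingSet (p δ d) := by
  obtain ⟨ζ, hζ, rfl⟩ := hz
  have hζ' : |ζ.re| + |ζ.im - 3 / 4| < 1 / 4 := hζ
  have him : 1 / 2 < ζ.im ∧ ζ.im ≤ 1 := by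
    constructor <;>
      linarith [abs_nonneg ζ.re, le_abs_self (ζ.im - 3 / 4), neg_abs_le (ζ.im - 3 / 4)]
  have horbit : ∀ n : ℕ, f^[n] ((2 : ℂ) ^ (-(k : ℤ)) * ζ) = (2 : ℂ) ^ (-((k : ℤ) + n)) * ζ := by
    intro n
    rw [iterate_f_two_zpow_mul _ him.1 him.2, Function.iterate_fixed (hmap_of_mem_W0 hζ)]
  have hnorm : ∀ n : ℕ, 0 < n → ‖(2 : ℂ) ^ (-((k : ℤ) + n)) * ζ‖ ≤ 1 := by
    intro n hn
    have : (2 : ℝ) ^ (-((k : ℤ) + n)) ≤ 1 / 2 :=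
      (zpow_le_zpow_right₀ one_le_two (by omega)).trans_eq (by norm_num : (2 : ℝ) ^ (-1 : ℤ) = _)
    rw [norm_two_zpow_mul]
    nlinarith [norm_lt_of_mem_W0 hζ, norm_nonneg ζ]
  intro hesc
  obtain ⟨n, hesc_n, hn⟩ := ((hesc.eventually_gt_atTop 1).and (eventually_gt_atTop 0)).exists
  rw [iterate_p_eq_iterate_f δ d fun i hi _ => (horbit i).symm ▸ hnorm i hi, horbit] at hesc_n
  exact (hnorm n hn).not_gt hesc_n

lemma exists_first_le_of_le_two_mul {r : ℕ → ℝ} {c : ℝ} (h0 : r 0 < c)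
    (hstep : ∀ n, r (n + 1) ≤ 2 * r n) (hex : ∃ n, c ≤ r n) :
    ∃ N, c ≤ r N ∧ r N < 2 * c ∧ ∀ n < N, r n < c := by
  classical
  refine ⟨Nat.find hex, Nat.find_spec hex, ?_, fun n hn => not_le.mp (Nat.find_min hex hn)⟩
  obtain ⟨N, hN⟩ := Nat.exists_eq_add_one_of_ne_zero
    (fun h => h0.not_ge (h ▸ Nat.find_spec hex : c ≤ r 0))
  have := not_le.mp (Nat.find_min hex (hN ▸ N.lt_succ_self : N < Nat.find hex))
  rw [hN]
  linarith [hstep N]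

lemma two_zpow_mul_mem_escapingSet {δ : ℝ} {d : ℕ} {ε : ℝ} (hI : I1 ε ⊆ escapingSet (p δ d))
    (hε : ε < 1 / 4) (k : ℤ) {ζ : ℂ} (h1 : 1 / 2 < ζ.im) (h2 : ζ.im ≤ 1) (hre : 0 < ζ.re)
    (hout : 1 / 4 < ζ.re + |ζ.im - 3 / 4|) (hre_lt : 2 ^ (-k) * ζ.re < 1 / 4)
    (him_le : 2 ^ (-k) * ζ.im ≤ ε) :
    (2 : ℂ) ^ (-k) * ζ ∈ escapingSet (p δ d) := by
  set x : ℕ → ℝ := fun n => (hSlice ζ.im)^[n] ζ.re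
  set r : ℕ → ℝ := fun n => 2 ^ (-(k + n)) * x n
  have horbit_re (n : ℕ) : (f^[n] ((2 : ℂ) ^ (-k) * ζ)).re = r n := by
    rw [iterate_f_two_zpow_mul k h1 h2, re_two_zpow_mul, iterate_hmap]
  have horbit_im (n : ℕ) : (f^[n] ((2 : ℂ) ^ (-k) * ζ)).im = 2 ^ (-(k + n)) * ζ.im := by
    rw [iterate_f_two_zpow_mul k h1 h2, im_two_zpow_mul, iterate_hmap]
  have hscale (n : ℕ) : (2 : ℝ) ^ (-(k + n)) = 2 ^ (-k) / 2 ^ n := by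
    rw [neg_add, zpow_add₀ two_ne_zero, zpow_neg, zpow_neg, zpow_natCast, div_eq_mul_inv]
  have hx_pos (n : ℕ) : 0 < x n := hre.trans_le (le_iterate_hSlice hre hout n)
  have hr_pos (n : ℕ) : 0 < r n := mul_pos (zpow_pos two_pos _) (hx_pos n)
  have hstep (n : ℕ) : r (n + 1) ≤ 2 * r n := by
    have hx : x (n + 1) ≤ 4 * x n := by
      simp only [x, Function.iterate_succ_apply']
      exact hSlice_le (hx_pos n).le
    have hq : (2 : ℝ) ^ (-(k + ((n + 1 : ℕ) : ℤ))) = 2 ^ (-(k + n)) / 2 := by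
      rw [hscale, hscale, pow_succ, div_div]
    have := mul_le_mul_of_nonneg_left hx (by positivity : (0 : ℝ) ≤ 2 ^ (-(k + n)) / 2)
    simp only [r, hq]
    linarith
  have hex : ∃ n, 1 / 4 ≤ r n := by
    obtain ⟨n, hn⟩ := exists_le_iterate_hSlice_div h1 h2 hre hout (2 ^ k / 4)
    refine ⟨n, ?_⟩
    calc (1 : ℝ) / 4 = 2 ^ (-k) * (2 ^ k / 4) := by
          rw [zpow_neg, ← mul_div_assoc, inv_mul_cancel₀ (zpow_ne_zero _ two_ne_zero)]
      _ ≤ 2 ^ (-k) * (x n / 2 ^ n) := by gcongr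
      _ = r n := by simp only [r, hscale]; ring
  have hr0 : r 0 < 1 / 4 := by
    simpa only [r, x, Nat.cast_zero, add_zero, Function.iterate_zero_apply] using hre_lt
  obtain ⟨N, hN_ge, hN_lt, hbefore⟩ := exists_first_le_of_le_two_mul hr0 hstep hex
  have him (n : ℕ) : 0 < 2 ^ (-(k + n)) * ζ.im ∧ 2 ^ (-(k + n)) * ζ.im ≤ ε := by
    have hle : (2 : ℝ) ^ (-(k + n)) ≤ 2 ^ (-k) := zpow_le_zpow_right₀ one_le_two (by omega)
    exact ⟨mul_pos (zpow_pos two_pos _) (by linarith),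
      (mul_le_mul_of_nonneg_right hle (by linarith)).trans him_le⟩
  have hnorm (n : ℕ) (hn : n ≤ N) : ‖f^[n] ((2 : ℂ) ^ (-k) * ζ)‖ ≤ 1 := by
    have hrn : r n ≤ 1 / 2 := by
      rcases hn.lt_or_eq with hn | rfl
      · linarith [hbefore n hn]
      · linarith
    calc _ ≤ |r n| + |2 ^ (-(k + n)) * ζ.im| := by
          rw [← horbit_re, ← horbit_im]; exact norm_le_abs_re_add_abs_im _
      _ ≤ 1 := by rw [abs_of_pos (hr_pos n), abs_of_pos (him n).1]; linarith [(him n).2]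
  refine mem_escapingSet_of_iterate N (hI ?_)
  rw [iterate_p_eq_iterate_f δ d fun i _ hi => hnorm i hi]
  rw [I1, mem_ofPred_eq, horbit_re, horbit_im]
  exact ⟨hN_ge, by linarith, (him N).1.le, (him N).2⟩

lemma frontier_W (k : ℕ) :
    frontier (W k) = (fun z : ℂ => (2 : ℂ) ^ (-(k : ℤ)) * z) '' frontier W0 :=
  ((Homeomorph.mulLeft₀ _ (zpow_ne_zero _ two_ne_zero)).image_frontier W0).symm

lemma frontier_W0_subset : frontier W0 ⊆ {ζ : ℂ | |ζ.re| + |ζ.im - 3 / 4| = 1 / 4} :=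
  frontier_lt_subset_eq (by fun_prop) continuous_const

section Escape

variable {δ : ℝ} {d : ℕ} {ε : ℝ}

lemma two_zpow_mul_add_mem_escapingSet (hI : I1 ε ⊆ escapingSet (p δ d)) (hε : ε < 1 / 4) {k : ℤ}
    (hk : (2 : ℝ) ^ (-k) ≤ ε) {ζ : ℂ} (h1 : 1 / 2 < ζ.im) (h2 : ζ.im ≤ 1) (hre : 0 ≤ ζ.re)
    (hbd : ζ.re + |ζ.im - 3 / 4| = 1 / 4) {η : ℝ} (hη : 0 < η) (hη' : η < 1 / 8) :
    (2 : ℂ) ^ (-k) * ζ + η ∈ escapingSet (p δ d) := by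
  have hη_pos : 0 < (2 : ℝ) ^ k * η := mul_pos (zpow_pos two_pos k) hη
  have hcancel : (2 : ℝ) ^ (-k) * 2 ^ k = 1 := by
    rw [← zpow_add₀ two_ne_zero, neg_add_cancel, zpow_zero]
  have hshift : (2 : ℂ) ^ (-k) * ζ + η = (2 : ℂ) ^ (-k) * (ζ + ((2 ^ k * η : ℝ) : ℂ)) := by
    rw [mul_add, two_zpow_eq_ofReal, ← ofReal_mul, ← mul_assoc, hcancel, one_mul]
  rw [hshift]
  have hζ_re : ζ.re ≤ 1 / 4 := by linarith [abs_nonneg (ζ.im - 3 / 4)]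
  apply two_zpow_mul_mem_escapingSet hI hε k <;>
    simp only [add_re, add_im, ofReal_re, ofReal_im, add_zero]
  · exact h1
  · exact h2
  · linarith
  · linarith
  · rw [mul_add, ← mul_assoc, hcancel, one_mul]
    nlinarith [zpow_pos (two_pos (α := ℝ)) (-k)]
  · nlinarith [zpow_pos (two_pos (α := ℝ)) (-k)]

/-- The bottom vertex `i/2` of `W₀` lies at the top of the next strip `Im ∈ (1/4, 1/2]`, where it
is the top vertex `i` of `W₁`. -/
lemma two_zpow_mul_add_mem_escapingSet_of_mem_frontier (hI : I1 ε ⊆ escapingSet (p δ d))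
    (hε : ε < 1 / 4) {k : ℤ} (hk : (2 : ℝ) ^ (-k) ≤ ε) {ζ : ℂ} (hζ : ζ ∈ frontier W0)
    (hre : 0 ≤ ζ.re) {η : ℝ} (hη : 0 < η) (hη' : η < 1 / 8) :
    (2 : ℂ) ^ (-k) * ζ + η ∈ escapingSet (p δ d) := by
  have hbd : ζ.re + |ζ.im - 3 / 4| = 1 / 4 := abs_of_nonneg hre ▸ frontier_W0_subset hζ
  have h2 : ζ.im ≤ 1 := by linarith [le_abs_self (ζ.im - 3 / 4)]
  rcases lt_or_ge (1 / 2) ζ.im with h1 | h1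
  · exact two_zpow_mul_add_mem_escapingSet hI hε hk h1 h2 hre hbd hη hη'
  have him : ζ.im = 1 / 2 := by linarith [neg_abs_le (ζ.im - 3 / 4)]
  have hζ_eq : (2 : ℂ) ^ (-k) * ζ = (2 : ℂ) ^ (-(k + 1)) * I := by
    have hre0 : ζ.re = 0 := by rw [him] at hbd; norm_num at hbd; linarith
    rw [neg_add, zpow_add₀ two_ne_zero, mul_assoc]
    congr 1
    apply Complex.ext <;> simp [hre0, him]
  rw [hζ_eq]
  have hk' : (2 : ℝ) ^ (-(k + 1)) ≤ ε := (zpow_le_zpow_right₀ one_le_two (by omega)).trans hk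
  refine two_zpow_mul_add_mem_escapingSet hI hε hk' ?_ ?_ ?_ ?_ hη hη' <;> norm_num

end Escape

theorem stmt17_general (δ : ℝ) (d : ℕ)
    (ε : ℝ) (hε : ε ∈ Ioo (0 : ℝ) (1/4)) (j : ℕ) (hj : (2:ℝ) ^ (-(j:ℤ)) ≤ ε)
    (hI : I1 ε ∪ I2 ε ⊆ escapingSet (p δ d))
    (w : ℂ) (hw : w ∈ frontier (W j)) (hwre : 0 ≤ w.re) :
    (∃ η₀ > 0, ∀ η : ℝ, 0 < η → η < η₀ → w + η ∈ escapingSet (p δ d)) ∧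
    w ∈ frontier (escapingSet (p δ d)) := by
  have hw_cl : w ∈ closure (W j) := frontier_subset_closure hw
  rw [frontier_W] at hw
  obtain ⟨ζ, hζ, rfl⟩ := hw
  have hre : 0 ≤ ζ.re := by
    rw [re_two_zpow_mul] at hwre
    exact nonneg_of_mul_nonneg_right hwre (zpow_pos two_pos _)
  have hesc : ∀ η : ℝ, 0 < η → η < 1 / 8 → (2 : ℂ) ^ (-(j : ℤ)) * ζ + η ∈ escapingSet (p δ d) :=
    fun η hη hη' => two_zpow_mul_add_mem_escapingSet_of_mem_frontier
      (subset_union_left.trans hI) hε.2 hj hζ hre hη hη'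
  refine ⟨⟨1 / 8, by norm_num, hesc⟩, ?_, fun hint => ?_⟩
  · have hlim : Tendsto (fun η : ℝ => (2 : ℂ) ^ (-(j : ℤ)) * ζ + η) (𝓝[>] 0)
        (𝓝 ((2 : ℂ) ^ (-(j : ℤ)) * ζ)) :=
      ((continuous_const.add continuous_ofReal).tendsto' 0 _ (by simp)).mono_left nhdsWithin_le_nhds
    refine mem_closure_of_tendsto hlim ?_
    filter_upwards [Ioo_mem_nhdsGT (by norm_num : (0 : ℝ) < 1 / 8)] with η hη using hesc η hη.1 hη.2
  · obtain ⟨v, hv_int, hv⟩ := mem_closure_iff_nhds.mp hw_cl _ (isOpen_interior.mem_nhds hint)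
    exact notMem_escapingSet_of_mem_W δ d j hv (interior_subset hv_int)

theorem stmt17 (δ : ℝ) (hδ : 0 < δ) (d : ℕ) (hd : Odd d)
    (ε : ℝ) (hε : ε ∈ Ioo (0 : ℝ) (1/4)) (j : ℕ) (hj : (2:ℝ) ^ (-(j:ℤ)) ≤ ε)
    (hI : I1 ε ∪ I2 ε ⊆ escapingSet (p δ d))
    (w : ℂ) (hw : w ∈ frontier (W j)) (hwre : 0 ≤ w.re) :
    (∃ η₀ > 0, ∀ η : ℝ, 0 < η → η < η₀ → w + η ∈ escapingSet (p δ d)) ∧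
    w ∈ frontier (escapingSet (p δ d)) :=
  stmt17_general δ d ε hε j hj hI w hw hwre
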